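/- arXiv:2303.03940 — 4 statements merged into one kernel-verified Lean document; each statement's English description precedes it below -/
import Mathlib

section
/- Floquet's theorem: Let n ≥ 1, T > 0, and let A : ℝ → Mₙ(ℂ) be continuous with A(t + T) = A(t) for all t ∈ ℝ. Then there exist a complex number μ and a solution χ of x' = A(t)x that is not identically zero such that χ(t + T) = μ · χ(t) for all t ∈ ℝ. -/
open Set Function
open scoped NNReal

section ODEAux

set_option linter.unusedSectionVars false

variable {E : Type*} [NormedAddCommGroup E] [NormedSpace ℝ E] [CompleteSpace E]
variable {v : ℝ → E → E} {K : ℝ≥0}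

theorem floquet_step (hvlip : ∀ t, LipschitzWith K (v t))
    (hvcont : ∀ x, Continuous fun t => v t x) (hv0 : ∀ t, v t 0 = 0)
    {h : ℝ} (hh : 0 < h) (hhK : (K : ℝ) * h ≤ 1 / 2) (t₀ : ℝ) (x₀ : E) :
    ∃ f : ℝ → E, f t₀ = x₀ ∧
      ∀ t ∈ Icc (t₀ - h) (t₀ + h), HasDerivWithinAt f (v t (f t)) (Icc (t₀ - h) (t₀ + h)) t := by
  have hnorm : ∀ t x, ‖v t x‖ ≤ (K : ℝ) * ‖x‖ := by
    intro t x
    have := (hvlip t).dist_le_mul x 0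
    rwa [hv0 t, dist_zero_right, dist_zero_right] at this
  have hpl : IsPicardLindelof v (tmin := t₀ - h) (tmax := t₀ + h) ⟨t₀, by constructor <;> linarith⟩
      x₀ (‖x₀‖₊ + 1) 0 (K * (2 * ‖x₀‖₊ + 1)) K :=
    { lipschitzOnWith := fun t _ => (hvlip t).lipschitzOnWith
      continuousOn := fun x _ => (hvcont x).continuousOn
      norm_le := by
        intro t _ x hx
        refine (hnorm t x).trans ?_
        have hx' : ‖x - x₀‖ ≤ ‖x₀‖ + 1 := by
          have := mem_closedBall_iff_norm.mp hx
          push_cast at this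
          exact this
        have : ‖x‖ ≤ 2 * ‖x₀‖ + 1 := by
          have := norm_sub_norm_le x x₀
          linarith
        push_cast
        nlinarith [K.coe_nonneg]
      mul_max_le := by
        have : max (t₀ + h - t₀) (t₀ - (t₀ - h)) = h := by
          rw [add_sub_cancel_left, sub_sub_cancel, max_self]
        dsimp only
        rw [this]
        push_cast
        nlinarith [K.coe_nonneg, norm_nonneg x₀, hh.le] }
  exact hpl.exists_eq_forall_mem_Icc_hasDerivWithinAt₀

theorem floquet_glue {a b c : ℝ} (hab : a ≤ b) (hbc : b ≤ c) {f g : ℝ → E}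
    (hf : ∀ t ∈ Icc a b, HasDerivWithinAt f (v t (f t)) (Icc a b) t)
    (hg : ∀ t ∈ Icc b c, HasDerivWithinAt g (v t (g t)) (Icc b c) t)
    (hfg : f b = g b) :
    ∃ χ : ℝ → E, (∀ t ∈ Icc a b, χ t = f t) ∧ (∀ t ∈ Icc b c, χ t = g t) ∧
      ∀ t ∈ Icc a c, HasDerivWithinAt χ (v t (χ t)) (Icc a c) t := by
  classical
  set χ : ℝ → E := fun t => if t ≤ b then f t else g t with hχ
  have eq₁ : ∀ s ∈ Icc a b, χ s = f s := fun s hs => if_pos hs.2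
  have eq₂ : ∀ s ∈ Icc b c, χ s = g s := by
    intro s hs
    by_cases h : s ≤ b
    · have hsb : s = b := le_antisymm h hs.1
      simp [hχ, hsb, hfg]
    · simp [hχ, h]
  refine ⟨χ, eq₁, eq₂, ?_⟩
  intro t ht
  rcases lt_trichotomy t b with htb | htb | htb
  · have htm : t ∈ Icc a b := ⟨ht.1, htb.le⟩
    have h1 := (hf t htm).congr eq₁ (eq₁ t htm)
    rw [show χ t = f t from eq₁ t htm]
    refine h1.mono_of_mem_nhdsWithin ?_
    exact mem_nhdsWithin.mpr ⟨Iio b, isOpen_Iio, htb, fun s hs => ⟨hs.2.1, hs.1.le⟩⟩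
  · subst htb
    have htm1 : t ∈ Icc a t := ⟨hab, le_rfl⟩
    have htm2 : t ∈ Icc t c := ⟨le_rfl, hbc⟩
    have h1 := (hf t htm1).congr eq₁ (eq₁ t htm1)
    have h2 := (hg t htm2).congr eq₂ (eq₂ t htm2)
    rw [← hfg] at h2
    rw [show χ t = f t from eq₁ t htm1]
    have := h1.union h2
    rwa [Icc_union_Icc_eq_Icc hab hbc] at this
  · have htm : t ∈ Icc b c := ⟨htb.le, ht.2⟩
    have h1 := (hg t htm).congr eq₂ (eq₂ t htm)
    rw [show χ t = g t from eq₂ t htm]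
    refine h1.mono_of_mem_nhdsWithin ?_
    exact mem_nhdsWithin.mpr ⟨Ioi b, isOpen_Ioi, htb, fun s hs => ⟨hs.1.le, hs.2.2⟩⟩

theorem floquet_icc (hvlip : ∀ t, LipschitzWith K (v t))
    (hvcont : ∀ x, Continuous fun t => v t x) (hv0 : ∀ t, v t 0 = 0)
    {h : ℝ} (hh : 0 < h) (hhK : (K : ℝ) * h ≤ 1 / 2) (m : ℕ) (x₀ : E) :
    ∃ f : ℝ → E, f 0 = x₀ ∧
      ∀ t ∈ Icc (-(m * h)) (m * h), HasDerivWithinAt f (v t (f t)) (Icc (-(m * h)) (m * h)) t := by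
  induction m generalizing x₀ with
  | zero =>
    obtain ⟨f, hf0, hfd⟩ := floquet_step hvlip hvcont hv0 hh hhK 0 x₀
    refine ⟨f, hf0, fun t ht => ?_⟩
    have hsub : Icc (-((0 : ℕ) * h)) ((0 : ℕ) * h) ⊆ Icc (0 - h) (0 + h) := by
      apply Icc_subset_Icc <;> push_cast <;> linarith
    exact (hfd t (hsub ht)).mono hsub
  | succ m ih =>
    obtain ⟨f, hf0, hfd⟩ := ih x₀
    set a : ℝ := m * h with ha
    have ha0 : 0 ≤ a := by positivity
    -- extend to the right
    obtain ⟨g, hg0, hgd⟩ := floquet_step hvlip hvcont hv0 hh hhK a (f a)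
    have hgd' : ∀ t ∈ Icc a (a + h), HasDerivWithinAt g (v t (g t)) (Icc a (a + h)) t := by
      intro t ht
      have hsub : Icc a (a + h) ⊆ Icc (a - h) (a + h) := Icc_subset_Icc (by linarith) le_rfl
      exact (hgd t (hsub ht)).mono hsub
    obtain ⟨χ₁, hχ₁f, hχ₁g, hχ₁d⟩ := floquet_glue (by linarith) (by linarith) hfd hgd' hg0.symm
    -- extend to the left
    obtain ⟨g₂, hg₂0, hg₂d⟩ := floquet_step hvlip hvcont hv0 hh hhK (-a) (χ₁ (-a))
    have hg₂d' : ∀ t ∈ Icc (-a - h) (-a), HasDerivWithinAt g₂ (v t (g₂ t)) (Icc (-a - h) (-a)) t := by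
      intro t ht
      have hsub : Icc (-a - h) (-a) ⊆ Icc (-a - h) (-a + h) := Icc_subset_Icc le_rfl (by linarith)
      exact (hg₂d t (hsub ht)).mono hsub
    obtain ⟨χ, hχg₂, hχχ₁, hχd⟩ := floquet_glue (by linarith) (by linarith) hg₂d' hχ₁d hg₂0
    have key : Icc (-(((m : ℕ) + 1 : ℕ) * h : ℝ)) ((((m : ℕ) + 1 : ℕ) : ℝ) * h) = Icc (-a - h) (a + h) := by
      have : (((m : ℕ) + 1 : ℕ) : ℝ) * h = a + h := by push_cast; ring
      rw [this]; ring_nf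
    refine ⟨χ, ?_, ?_⟩
    · have h0mem : (0 : ℝ) ∈ Icc (-a) (a + h) := ⟨by linarith, by linarith⟩
      rw [hχχ₁ 0 h0mem, hχ₁f 0 ⟨by linarith, ha0⟩, hf0]
    · intro t ht
      rw [key] at ht ⊢
      
      exact hχd t ht

theorem floquet_uniq (hvlip : ∀ t, LipschitzWith K (v t)) {a b : ℝ} {f g : ℝ → E}
    (hf : ∀ t ∈ Icc a b, HasDerivWithinAt f (v t (f t)) (Icc a b) t)
    (hg : ∀ t ∈ Icc a b, HasDerivWithinAt g (v t (g t)) (Icc a b) t)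
    {t₀ : ℝ} (ht₀ : t₀ ∈ Icc a b) (heq : f t₀ = g t₀) : EqOn f g (Icc a b) := by
  have hlip : ∀ t, LipschitzOnWith K (v t) univ := fun t => (hvlip t).lipschitzOnWith
  have hcf : ContinuousOn f (Icc a b) := fun s hs => (hf s hs).continuousWithinAt
  have hcg : ContinuousOn g (Icc a b) := fun s hs => (hg s hs).continuousWithinAt
  intro t ht
  rcases le_total t t₀ with hlt | hlt
  · have := ODE_solution_unique_of_mem_Icc_left (s := fun _ => univ) (fun t _ => hlip t)
      (hcf.mono (Icc_subset_Icc_right ht₀.2))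
      (fun s hs => (hf s ⟨hs.1.le, hs.2.trans ht₀.2⟩).mono_of_mem_nhdsWithin
        (Icc_mem_nhdsLE_of_mem ⟨hs.1, hs.2.trans ht₀.2⟩))
      (fun _ _ => mem_univ _)
      (hcg.mono (Icc_subset_Icc_right ht₀.2))
      (fun s hs => (hg s ⟨hs.1.le, hs.2.trans ht₀.2⟩).mono_of_mem_nhdsWithin
        (Icc_mem_nhdsLE_of_mem ⟨hs.1, hs.2.trans ht₀.2⟩))
      (fun _ _ => mem_univ _) heq
    exact this ⟨ht.1, hlt⟩
  · have := ODE_solution_unique_of_mem_Icc_right (s := fun _ => univ) (fun t _ => hlip t)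
      (hcf.mono (Icc_subset_Icc_left ht₀.1))
      (fun s hs => (hf s ⟨ht₀.1.trans hs.1, hs.2.le⟩).mono_of_mem_nhdsWithin
        (Icc_mem_nhdsGE_of_mem ⟨ht₀.1.trans hs.1, hs.2⟩))
      (fun _ _ => mem_univ _)
      (hcg.mono (Icc_subset_Icc_left ht₀.1))
      (fun s hs => (hg s ⟨ht₀.1.trans hs.1, hs.2.le⟩).mono_of_mem_nhdsWithin
        (Icc_mem_nhdsGE_of_mem ⟨ht₀.1.trans hs.1, hs.2⟩))
      (fun _ _ => mem_univ _) heq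
    exact this ⟨hlt, ht.2⟩

theorem floquet_uniq_global (hvlip : ∀ t, LipschitzWith K (v t)) {f g : ℝ → E}
    (hf : ∀ t, HasDerivAt f (v t (f t)) t) (hg : ∀ t, HasDerivAt g (v t (g t)) t)
    (h0 : f 0 = g 0) : f = g := by
  funext t
  have h0m : (0 : ℝ) ∈ Icc (-|t|) |t| := ⟨neg_nonpos.mpr (abs_nonneg t), abs_nonneg t⟩
  exact floquet_uniq hvlip (fun s _ => (hf s).hasDerivWithinAt)
    (fun s _ => (hg s).hasDerivWithinAt) h0m h0 ⟨neg_abs_le t, le_abs_self t⟩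

theorem floquet_global (hvlip : ∀ t, LipschitzWith K (v t))
    (hvcont : ∀ x, Continuous fun t => v t x) (hv0 : ∀ t, v t 0 = 0) (x₀ : E) :
    ∃ f : ℝ → E, f 0 = x₀ ∧ ∀ t, HasDerivAt f (v t (f t)) t := by
  set h : ℝ := 1 / (2 * (K : ℝ) + 2) with hdef
  have hh : 0 < h := by positivity
  have hhK : (K : ℝ) * h ≤ 1 / 2 := by
    rw [hdef, mul_one_div, div_le_div_iff₀ (by positivity) two_pos]
    nlinarith [K.coe_nonneg]
  have hex := fun m => floquet_icc hvlip hvcont hv0 hh hhK m x₀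
  choose F hF0 hFd using hex
  -- consistency
  have aux : ∀ m m' : ℕ, m ≤ m' → EqOn (F m) (F m') (Icc (-(m * h)) (m * h)) := by
    intro m m' hm
    have hsub : Icc (-(m * h)) ((m : ℝ) * h) ⊆ Icc (-(m' * h)) ((m' : ℝ) * h) := by
      have : (m : ℝ) * h ≤ (m' : ℝ) * h :=
        mul_le_mul_of_nonneg_right (Nat.cast_le.mpr hm) hh.le
      exact Icc_subset_Icc (by linarith) this
    have h0m : (0 : ℝ) ∈ Icc (-(m * h)) ((m : ℝ) * h) :=
      ⟨neg_nonpos.mpr (by positivity), by positivity⟩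
    exact floquet_uniq hvlip (hFd m)
      (fun t ht => (hFd m' t (hsub ht)).mono hsub) h0m ((hF0 m).trans (hF0 m').symm)
  have claim : ∀ (m m' : ℕ) (t : ℝ), t ∈ Icc (-(m * h)) ((m : ℝ) * h) →
      t ∈ Icc (-(m' * h)) ((m' : ℝ) * h) → F m t = F m' t := by
    intro m m' t htm htm'
    rcases le_total m m' with hmm | hmm
    · exact aux m m' hmm htm
    · exact (aux m' m hmm htm').symm
  set N : ℝ → ℕ := fun t => ⌈(|t| + 1) / h⌉₊ with hN
  have key : ∀ t : ℝ, |t| + 1 ≤ (N t : ℝ) * h := fun t =>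
    (div_le_iff₀ hh).mp (Nat.le_ceil _)
  have hmem : ∀ (t : ℝ) (m : ℕ), |t| + 1 ≤ (m : ℝ) * h →
      t ∈ Icc (-(m * h)) ((m : ℝ) * h) := by
    intro t m hm
    have : |t| ≤ (m : ℝ) * h := by linarith
    exact abs_le.mp this
  refine ⟨fun t => F (N t) t, ?_, ?_⟩
  · have h0 : (0 : ℝ) ∈ Icc (-((N 0 : ℝ) * h)) ((N 0 : ℝ) * h) := hmem 0 _ (by simpa using key 0)
    exact hF0 (N 0)
  · intro t
    set m := N t with hm
    have htIoo : t ∈ Ioo (-((m : ℝ) * h)) ((m : ℝ) * h) := by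
      have h1 : |t| < (m : ℝ) * h := lt_of_lt_of_le (lt_add_one |t|) (key t)
      obtain ⟨h2, h3⟩ := abs_lt.mp h1
      exact ⟨h2, h3⟩
    have hnhds : Icc (-((m : ℝ) * h)) ((m : ℝ) * h) ∈ nhds t := Icc_mem_nhds htIoo.1 htIoo.2
    have hd : HasDerivAt (F m) (v t (F m t)) t :=
      (hFd m t (Ioo_subset_Icc_self htIoo)).hasDerivAt hnhds
    have heq : (fun t => F (N t) t) =ᶠ[nhds t] F m :=
      Filter.eventuallyEq_of_mem hnhds
        (fun s hs => claim (N s) m s (hmem s _ (key s)) hs)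
    have := hd.congr_of_eventuallyEq heq
    rwa [show F m t = F (N t) t from (claim (N t) m t (hmem t _ (key t))
      (Ioo_subset_Icc_self htIoo)).symm] at this

end ODEAux

/-- **Floquet's theorem.** Let `n ≥ 1`, `T > 0`, and let `A : ℝ → Mₙ(ℂ)` be continuous with
`A (t + T) = A t` for all `t`. Then there exist a complex number `μ` and a solution `χ` of
`x' = A(t) x` that is not identically zero such that `χ (t + T) = μ • χ t` for all `t`. -/
theorem floquet_theorem (n : ℕ) (hn : 1 ≤ n) (T : ℝ) (hT : 0 < T)
    (A : ℝ → Matrix (Fin n) (Fin n) ℂ)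
    (hA_cont : ∀ i j, Continuous fun t => A t i j)
    (hA_per : ∀ t, A (t + T) = A t) :
    ∃ (μ : ℂ) (χ : ℝ → (Fin n → ℂ)),
      (∀ t, HasDerivAt χ ((A t).mulVec (χ t)) t) ∧
      (∃ t, χ t ≠ 0) ∧
      (∀ t, χ (t + T) = μ • χ t) := by
  classical
  set v : ℝ → (Fin n → ℂ) → (Fin n → ℂ) := fun t x => (A t).mulVec x with hv
  -- the bound on the matrix entries
  set B : ℝ → ℝ := fun t => ∑ i : Fin n, ∑ j : Fin n, ‖A t i j‖ with hB
  have hB_cont : Continuous B := by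
    apply continuous_finset_sum
    intro i _
    exact continuous_finset_sum _ fun j _ => (hA_cont i j).norm
  have hB_per : Periodic B T := fun t => by simp [hB, hA_per]
  obtain ⟨c, hc⟩ := isCompact_Icc.exists_bound_of_continuousOn (s := Icc 0 T) hB_cont.continuousOn
  have hc0 : 0 ≤ c := le_trans (norm_nonneg _) (hc 0 ⟨le_rfl, hT.le⟩)
  have hcB : ∀ t, B t ≤ c := by
    intro t
    obtain ⟨y, hy, hyB⟩ := hB_per.exists_mem_Ico₀ hT t
    calc B t = B y := hyB
    _ ≤ ‖B y‖ := le_abs_self _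
    _ ≤ c := hc y ⟨hy.1, hy.2.le⟩
  set K : ℝ≥0 := Real.toNNReal c with hK
  have hKc : (K : ℝ) = c := Real.coe_toNNReal c hc0
  have hbound : ∀ t (z : Fin n → ℂ), ‖(A t).mulVec z‖ ≤ (K : ℝ) * ‖z‖ := by
    intro t z
    rw [hKc]
    refine (pi_norm_le_iff_of_nonneg (by positivity)).mpr fun i => ?_
    have h1 : ‖(A t).mulVec z i‖ ≤ ∑ j : Fin n, ‖A t i j‖ * ‖z j‖ := by
      simp only [Matrix.mulVec, dotProduct]
      refine (norm_sum_le _ _).trans (le_of_eq ?_)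
      simp [norm_mul]
    have h2 : ∑ j : Fin n, ‖A t i j‖ * ‖z j‖ ≤ (∑ j : Fin n, ‖A t i j‖) * ‖z‖ := by
      rw [Finset.sum_mul]
      exact Finset.sum_le_sum fun j _ =>
        mul_le_mul_of_nonneg_left (norm_le_pi_norm z j) (norm_nonneg _)
    have h3 : (∑ j : Fin n, ‖A t i j‖) ≤ B t :=
      Finset.single_le_sum (f := fun i => ∑ j : Fin n, ‖A t i j‖)
        (fun i _ => Finset.sum_nonneg fun j _ => norm_nonneg _) (Finset.mem_univ i)
    calc ‖(A t).mulVec z i‖ ≤ (∑ j : Fin n, ‖A t i j‖) * ‖z‖ := h1.trans h2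
    _ ≤ c * ‖z‖ := mul_le_mul_of_nonneg_right (h3.trans (hcB t)) (norm_nonneg _)
  have hvlip : ∀ t, LipschitzWith K (v t) := by
    intro t
    refine LipschitzWith.of_dist_le_mul fun x y => ?_
    rw [dist_eq_norm, dist_eq_norm, hv]
    simp only
    rw [← Matrix.mulVec_sub]
    exact hbound t (x - y)
  have hvcont : ∀ x, Continuous fun t => v t x := by
    intro x
    refine continuous_pi fun i => ?_
    simp only [hv, Matrix.mulVec, dotProduct]
    exact continuous_finset_sum _ fun j _ => (hA_cont i j).mul continuous_const
  have hv0 : ∀ t, v t 0 = 0 := fun t => Matrix.mulVec_zero _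
  -- global solutions
  choose sol hsol0 hsolD using floquet_global hvlip hvcont hv0
  -- the monodromy operator
  have hadd : ∀ x y : Fin n → ℂ, sol (x + y) = fun t => sol x t + sol y t := by
    intro x y
    refine floquet_uniq_global hvlip (hsolD _) (fun t => ?_) (by rw [hsol0, hsol0, hsol0])
    have := (hsolD x t).add (hsolD y t)
    simp only [hv, Matrix.mulVec_add] at this ⊢; exact this
  have hsmul : ∀ (a : ℂ) (x : Fin n → ℂ), sol (a • x) = fun t => a • sol x t := by
    intro a x
    refine floquet_uniq_global hvlip (hsolD _) (fun t => ?_) (by rw [hsol0, hsol0])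
    have := (hsolD x t).const_smul a
    simp only [hv, Matrix.mulVec_smul] at this ⊢; exact this
  set M : Module.End ℂ (Fin n → ℂ) :=
    { toFun := fun x => sol x T
      map_add' := fun x y => by rw [hadd]
      map_smul' := fun a x => by rw [hsmul]; rfl } with hM
  haveI : NeZero n := ⟨by omega⟩
  haveI : Nontrivial (Fin n → ℂ) := inferInstance
  obtain ⟨μ, hμ⟩ := Module.End.exists_eigenvalue M
  obtain ⟨w, hw⟩ := hμ.exists_hasEigenvector
  refine ⟨μ, sol w, hsolD w, ⟨0, by rw [hsol0]; exact hw.right⟩, ?_⟩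
  -- periodicity relation
  have hgd : ∀ t, HasDerivAt (fun s => sol w (s + T)) (v t (sol w (t + T))) t := by
    intro t
    have hbase := hsolD w (t + T)
    have hshift : HasDerivAt (fun s : ℝ => s + T) 1 t := (hasDerivAt_id t).add_const T
    have := hbase.scomp t hshift
    simpa only [one_smul, hv, hA_per, Function.comp_def] using this
  have hgd2 : ∀ t, HasDerivAt (fun s => μ • sol w s) (v t (μ • sol w t)) t := by
    intro t
    have := (hsolD w t).const_smul μ
    simp only [hv, Matrix.mulVec_smul] at this ⊢; exact this
  have h0 : sol w (0 + T) = μ • sol w 0 := by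
    rw [zero_add, hsol0]
    exact hw.apply_eq_smul
  have := floquet_uniq_global hvlip hgd hgd2 h0
  exact fun t => congrFun this t
end

section
/- Let A : ℝ → Mₙ(ℂ) be continuous and T-periodic (T > 0), and let Φ be a fundamental matrix solution of Φ'(t) = A(t)Φ(t). Then t ↦ Φ(t + T) is also a fundamental matrix solution, and the matrix C(t) := Φ(t)⁻¹ · Φ(t + T) is invertible and independent of t; that is, there exists a single nonsingular matrix C with Φ(t + T) = Φ(t) · C for all t ∈ ℝ. -/
open Matrix

attribute [local instance] Matrix.linftyOpNormedRing Matrix.linftyOpNormedAlgebra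

private lemma hasDerivAt_matrix {n : ℕ} {f : ℝ → Matrix (Fin n) (Fin n) ℂ}
    {f' : Matrix (Fin n) (Fin n) ℂ} {t : ℝ}
    (h : ∀ i j, HasDerivAt (fun s => f s i j) (f' i j) t) :
    HasDerivAt f f' t := by
  have H : HasDerivAt (fun s => ∑ i : Fin n, ∑ j : Fin n, f s i j • Matrix.single i j (1 : ℂ))
      (∑ i : Fin n, ∑ j : Fin n, f' i j • Matrix.single i j (1 : ℂ)) t :=
    HasDerivAt.fun_sum fun i _ => HasDerivAt.fun_sum fun j _ => (h i j).smul_const _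
  simpa only [smul_single, smul_eq_mul, mul_one, ← matrix_eq_sum_single] using H

/-- Let `A : ℝ → Mₙ(ℂ)` be continuous and `T`-periodic, and let `Φ` be a fundamental matrix
solution of `Φ' = A(t) Φ`. Then `t ↦ Φ (t + T)` is also a fundamental matrix solution, and
there is a single nonsingular matrix `C` with `Φ (t + T) = Φ t * C` for all `t`
(namely `C = Φ(t)⁻¹ Φ(t+T)` is independent of `t`). -/
theorem fundamental_matrix_monodromy (n : ℕ) (T : ℝ) (hT : 0 < T)
    (A : ℝ → Matrix (Fin n) (Fin n) ℂ)
    (hA_cont : ∀ i j, Continuous fun t => A t i j)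
    (hA_per : ∀ t, A (t + T) = A t)
    (Φ : ℝ → Matrix (Fin n) (Fin n) ℂ)
    (hΦ : ∀ t i j, HasDerivAt (fun s => Φ s i j) ((A t * Φ t) i j) t)
    (hΦ_inv : ∀ t, IsUnit (Φ t)) :
    (∀ t i j, HasDerivAt (fun s => Φ (s + T) i j) ((A t * Φ (t + T)) i j) t) ∧
    (∀ t, IsUnit (Φ (t + T))) ∧
    ∃ C : Matrix (Fin n) (Fin n) ℂ, IsUnit C ∧
      (∀ t, (Φ t)⁻¹ * Φ (t + T) = C) ∧
      (∀ t, Φ (t + T) = Φ t * C) := by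
  haveI : CompleteSpace (Matrix (Fin n) (Fin n) ℂ) := FiniteDimensional.complete ℝ _
  have hshift : ∀ t i j, HasDerivAt (fun s => Φ (s + T) i j) ((A t * Φ (t + T)) i j) t := by
    intro t i j
    have := (hΦ (t + T) i j).comp_add_const t T
    simpa [hA_per] using this
  refine ⟨hshift, fun t => hΦ_inv (t + T), ?_⟩
  have hΦ' : ∀ t, HasDerivAt Φ (A t * Φ t) t := fun t => hasDerivAt_matrix (hΦ t)
  have hΨ' : ∀ t, HasDerivAt (fun s => Φ (s + T)) (A t * Φ (t + T)) t :=
    fun t => hasDerivAt_matrix (hshift t)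
  have hdet : ∀ t, IsUnit (Φ t).det := fun t => (isUnit_iff_isUnit_det _).mp (hΦ_inv t)
  have hinv : ∀ t, HasDerivAt (fun s => Ring.inverse (Φ s))
      (-((Φ t)⁻¹ * A t)) t := by
    intro t
    obtain ⟨u, hu⟩ := hΦ_inv t
    have h := (hu ▸ hasFDerivAt_ringInverse (𝕜 := ℝ) (R := Matrix (Fin n) (Fin n) ℂ) u).comp_hasDerivAt t
      (hΦ' t)
    have hcoe : (↑u⁻¹ : Matrix (Fin n) (Fin n) ℂ) = (Φ t)⁻¹ := by
      rw [← hu]; exact (Matrix.coe_units_inv u)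
    simp only [ContinuousLinearMap.neg_apply, ContinuousLinearMap.mulLeftRight_apply, hcoe] at h
    have : (Φ t)⁻¹ * (A t * Φ t) * (Φ t)⁻¹ = (Φ t)⁻¹ * A t := by
      rw [mul_assoc, mul_assoc, Matrix.mul_nonsing_inv _ (hdet t), mul_one]
    rw [this] at h
    exact h
  set F : ℝ → Matrix (Fin n) (Fin n) ℂ := fun s => Ring.inverse (Φ s) * Φ (s + T) with hF
  have hF' : ∀ t, HasDerivAt F 0 t := by
    intro t
    have h := ((hinv t).mul (hΨ' t))
    have hre : Ring.inverse (Φ t) = (Φ t)⁻¹ := (Matrix.nonsing_inv_eq_ringInverse _).symm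
    rw [hre] at h
    have : -((Φ t)⁻¹ * A t) * Φ (t + T) + (Φ t)⁻¹ * (A t * Φ (t + T)) = 0 := by
      rw [neg_mul, mul_assoc, neg_add_cancel]
    rwa [this] at h
  have hconst : ∀ t, F t = F 0 := by
    intro t
    exact is_const_of_deriv_eq_zero (fun s => (hF' s).differentiableAt)
      (fun s => (hF' s).deriv) t 0
  refine ⟨(Φ 0)⁻¹ * Φ (0 + T), ?_, ?_, ?_⟩
  · exact ((Matrix.isUnit_nonsing_inv_iff).mpr (hΦ_inv 0)).mul (hΦ_inv (0 + T))
  · intro t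
    have := hconst t
    simpa only [hF, Matrix.nonsing_inv_eq_ringInverse] using this
  · intro t
    have ht : (Φ t)⁻¹ * Φ (t + T) = (Φ 0)⁻¹ * Φ (0 + T) := by
      have := hconst t
      simpa only [hF, Matrix.nonsing_inv_eq_ringInverse] using this
    rw [← ht, ← mul_assoc, Matrix.mul_nonsing_inv _ (hdet t), one_mul]
end

section
/- Floquet normal form of solutions (Theorem 3): Let A : ℝ → Mₙ(ℂ) be continuous and T-periodic (T > 0), let Φ be the differentiable matrix solution of Φ'(t) = A(t)Φ(t) with Φ(0) = I, and suppose the monodromy matrix C = Φ(T) has n distinct eigenvalues μ₁, …, μₙ. Choose σ₁, …, σₙ ∈ ℂ with exp(σᵢ T) = μᵢ (these exist since each μᵢ ≠ 0, C being invertible). Then there exist n linearly independent solutions χ₁, …, χₙ of x' = A(t)x and functions P₁, …, Pₙ : ℝ → ℂⁿ with Pᵢ(t + T) = Pᵢ(t) for all t, such that χᵢ(t) = exp(σᵢ t) · Pᵢ(t) for all t ∈ ℝ and each i. -/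
open Matrix Set Polynomial

set_option maxHeartbeats 1000000 in
lemma floquet_aux_eigenvector {n : ℕ} {M : Matrix (Fin n) (Fin n) ℂ} {μ : ℂ}
    (h : M.charpoly.IsRoot μ) : ∃ v : Fin n → ℂ, v ≠ 0 ∧ M *ᵥ v = μ • v := by
  have hdet : ((Matrix.scalar (Fin n)) μ - M).det = 0 := by
    have h' := h
    rwa [Polynomial.IsRoot, Matrix.charpoly, _root_.eval_det, matPolyEquiv_charmatrix,
      Polynomial.eval_sub, Polynomial.eval_X, Polynomial.eval_C] at h'
  obtain ⟨v, hv, hmul⟩ := (Matrix.exists_mulVec_eq_zero_iff).2 hdet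
  refine ⟨v, hv, ?_⟩
  have hscalar : (Matrix.scalar (Fin n)) μ *ᵥ v = μ • v := by
    ext i
    simp [Matrix.scalar_apply, Matrix.mulVec_diagonal]
  rw [Matrix.sub_mulVec, hscalar, sub_eq_zero] at hmul
  exact hmul.symm

set_option maxHeartbeats 1000000 in
lemma floquet_aux_deriv {n : ℕ} {A Φ : ℝ → Matrix (Fin n) (Fin n) ℂ}
    (hΦ : ∀ t i j, HasDerivAt (fun s => Φ s i j) ((A t * Φ t) i j) t)
    (v : Fin n → ℂ) (t : ℝ) :
    HasDerivAt (fun s => Φ s *ᵥ v) ((A t) *ᵥ (Φ t *ᵥ v)) t := by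
  rw [Matrix.mulVec_mulVec]
  apply hasDerivAt_pi.2
  intro i
  have h : HasDerivAt (fun s => ∑ j, Φ s i j * v j) (∑ j, (A t * Φ t) i j * v j) t :=
    HasDerivAt.fun_sum fun j _ => (hΦ t i j).mul_const (v j)
  simpa [Matrix.mulVec, dotProduct] using h

set_option maxHeartbeats 1000000 in
lemma floquet_aux_unique {n : ℕ} {A : ℝ → Matrix (Fin n) (Fin n) ℂ}
    (hA_cont : ∀ i j, Continuous fun t => A t i j)
    {f g : ℝ → Fin n → ℂ}
    (hf : ∀ t, HasDerivAt f ((A t) *ᵥ f t) t)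
    (hg : ∀ t, HasDerivAt g ((A t) *ᵥ g t) t)
    (h0 : f 0 = g 0) : f = g := by
  funext t
  set R : ℝ := |t| + 1 with hR
  have habs : 0 ≤ |t| := abs_nonneg t
  have habs2 : -|t| ≤ t := neg_abs_le t
  have habs3 : t ≤ |t| := le_abs_self t
  have htmem : t ∈ Ioo (-R) R := ⟨by simp only [hR]; linarith, by simp only [hR]; linarith⟩
  have h0mem : (0 : ℝ) ∈ Ioo (-R) R := ⟨by simp only [hR]; linarith, by simp only [hR]; linarith⟩
  set B : ℝ → ℝ := fun s => ∑ i, ∑ j, ‖A s i j‖ with hB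
  have hBc : ContinuousOn B (Icc (-R) R) := by
    apply Continuous.continuousOn
    exact continuous_finset_sum _ fun i _ => continuous_finset_sum _ fun j _ =>
      (hA_cont i j).norm
  obtain ⟨s₀, hs₀mem, hs₀⟩ := (isCompact_Icc (a := -R) (b := R)).exists_isMaxOn
    (nonempty_Icc.2 (by linarith)) hBc
  have hBnonneg : ∀ s, 0 ≤ B s := fun s =>
    Finset.sum_nonneg fun i _ => Finset.sum_nonneg fun j _ => norm_nonneg _
  set K : NNReal := Real.toNNReal (B s₀) with hK
  have hbound : ∀ s ∈ Icc (-R) R, ∀ x : Fin n → ℂ, ‖(A s) *ᵥ x‖ ≤ (K : ℝ) * ‖x‖ := by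
    intro s hs x
    have hKB : B s ≤ (K : ℝ) := by
      rw [hK, Real.coe_toNNReal _ (hBnonneg s₀)]
      exact hs₀ hs
    have hr : 0 ≤ (K : ℝ) * ‖x‖ := mul_nonneg K.coe_nonneg (norm_nonneg x)
    rw [pi_norm_le_iff_of_nonneg hr]
    intro i
    calc ‖((A s) *ᵥ x) i‖ = ‖∑ j, A s i j * x j‖ := by simp [Matrix.mulVec, dotProduct]
      _ ≤ ∑ j, ‖A s i j * x j‖ := norm_sum_le _ _
      _ ≤ ∑ j, ‖A s i j‖ * ‖x‖ := by
          apply Finset.sum_le_sum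
          intro j _
          rw [norm_mul]
          exact mul_le_mul_of_nonneg_left (norm_le_pi_norm x j) (norm_nonneg _)
      _ = (∑ j, ‖A s i j‖) * ‖x‖ := by rw [Finset.sum_mul]
      _ ≤ B s * ‖x‖ := by
          apply mul_le_mul_of_nonneg_right _ (norm_nonneg x)
          exact Finset.single_le_sum (fun k _ => Finset.sum_nonneg fun j _ => norm_nonneg _)
            (Finset.mem_univ i)
      _ ≤ (K : ℝ) * ‖x‖ := mul_le_mul_of_nonneg_right hKB (norm_nonneg x)
  set S : ℝ → Set (Fin n → ℂ) := fun s => if s ∈ Ioo (-R) R then univ else ∅ with hS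
  have hv : ∀ s, LipschitzOnWith K (fun x => (A s) *ᵥ x) (S s) := by
    intro s
    by_cases hs : s ∈ Ioo (-R) R
    · rw [hS]; simp only [hs, if_pos]
      apply LipschitzWith.lipschitzOnWith
      apply LipschitzWith.of_dist_le_mul
      intro x y
      rw [dist_eq_norm, dist_eq_norm, ← Matrix.mulVec_sub]
      exact hbound s (Ioo_subset_Icc_self hs) (x - y)
    · rw [hS]; simp only [hs, if_false]
      exact lipschitzOnWith_empty _ _
  have heq := ODE_solution_unique_of_mem_Ioo (v := fun s x => (A s) *ᵥ x) (s := S) (fun s _ => hv s) h0mem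
    (fun s hs => ⟨hf s, by simp [hS, Set.mem_Ioo, hs.1, hs.2]⟩) (fun s hs => ⟨hg s, by simp [hS, Set.mem_Ioo, hs.1, hs.2]⟩) h0
  exact heq htmem

set_option maxHeartbeats 1000000 in

/-- **Floquet normal form of solutions (Theorem 3).** Let `A : ℝ → Mₙ(ℂ)` be continuous and
`T`-periodic (`T > 0`), let `Φ` be the differentiable matrix solution of `Φ'(t) = A(t) Φ(t)`
with `Φ 0 = 1`, and suppose the monodromy matrix `Φ T` has `n` distinct eigenvalues
`μ₁, …, μₙ`. Choose `σ₁, …, σₙ ∈ ℂ` with `exp (σᵢ T) = μᵢ`. Then there exist `n` linearly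
independent solutions `χ₁, …, χₙ` of `x' = A(t) x` and `T`-periodic functions
`P₁, …, Pₙ : ℝ → ℂⁿ` such that `χᵢ t = exp (σᵢ t) • Pᵢ t` for all `t` and all `i`. -/
theorem floquet_normal_form (n : ℕ) (T : ℝ) (hT : 0 < T)
    (A : ℝ → Matrix (Fin n) (Fin n) ℂ)
    (hA_cont : ∀ i j, Continuous fun t => A t i j)
    (hA_per : ∀ t, A (t + T) = A t)
    (Φ : ℝ → Matrix (Fin n) (Fin n) ℂ)
    (hΦ : ∀ t i j, HasDerivAt (fun s => Φ s i j) ((A t * Φ t) i j) t)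
    (hΦ0 : Φ 0 = 1)
    (μ : Fin n → ℂ)
    (hμ_eigen : ∀ i, (Φ T).charpoly.IsRoot (μ i))
    (hμ_distinct : Function.Injective μ)
    (σ : Fin n → ℂ)
    (hσ : ∀ i, Complex.exp (σ i * T) = μ i) :
    ∃ (χ : Fin n → ℝ → (Fin n → ℂ)) (P : Fin n → ℝ → (Fin n → ℂ)),
      (∀ i t, HasDerivAt (χ i) ((A t).mulVec (χ i t)) t) ∧
      LinearIndependent ℂ χ ∧
      (∀ i t, P i (t + T) = P i t) ∧
      (∀ i t, χ i t = Complex.exp (σ i * t) • P i t) := by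
  have hev : ∀ i, ∃ w : Fin n → ℂ, w ≠ 0 ∧ (Φ T) *ᵥ w = μ i • w := fun i =>
    floquet_aux_eigenvector (hμ_eigen i)
  choose v hv_ne hv_eig using hev
  refine ⟨fun i t => Φ t *ᵥ v i,
    fun i t => Complex.exp (-(σ i * t)) • (Φ t *ᵥ v i), ?_, ?_, ?_, ?_⟩
  · exact fun i t => floquet_aux_deriv hΦ (v i) t
  · have hVli : LinearIndependent ℂ v := by
      apply Module.End.eigenvectors_linearIndependent' (Matrix.toLin' (Φ T)) μ hμ_distinct
      intro i
      refine ⟨Module.End.mem_eigenspace_iff.2 ?_, hv_ne i⟩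
      rw [Matrix.toLin'_apply, hv_eig i]
    apply LinearIndependent.of_comp (LinearMap.proj (R := ℂ) (0 : ℝ))
    have hcomp : (⇑(LinearMap.proj (R := ℂ) (0 : ℝ)) ∘ fun i t => Φ t *ᵥ v i) = v := by
      funext i
      show Φ 0 *ᵥ v i = v i
      rw [hΦ0, Matrix.one_mulVec]
    rw [hcomp]
    exact hVli
  · intro i t
    have key : Φ (t + T) *ᵥ v i = Φ t *ᵥ ((Φ T) *ᵥ v i) := by
      have hf : ∀ s, HasDerivAt (fun u => Φ (u + T) *ᵥ v i)
          ((A s) *ᵥ (Φ (s + T) *ᵥ v i)) s := by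
        intro s
        have h1 := floquet_aux_deriv hΦ (v i) (s + T)
        have h2 : HasDerivAt (fun u : ℝ => u + T) 1 s := (hasDerivAt_id s).add_const T
        have h3 := h1.scomp s h2
        rw [one_smul, hA_per s] at h3
        simpa [Function.comp_def] using h3
      have hg : ∀ s, HasDerivAt (fun u => Φ u *ᵥ ((Φ T) *ᵥ v i))
          ((A s) *ᵥ (Φ s *ᵥ ((Φ T) *ᵥ v i))) s := fun s =>
        floquet_aux_deriv hΦ _ s
      have h0 : (fun u => Φ (u + T) *ᵥ v i) 0 = (fun u => Φ u *ᵥ ((Φ T) *ᵥ v i)) 0 := by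
        simp [hΦ0, Matrix.one_mulVec]
      exact congrFun (floquet_aux_unique hA_cont hf hg h0) t
    show Complex.exp (-(σ i * ↑(t + T))) • (Φ (t + T) *ᵥ v i)
        = Complex.exp (-(σ i * ↑t)) • (Φ t *ᵥ v i)
    rw [key, hv_eig i, Matrix.mulVec_smul, smul_smul, ← hσ i, ← Complex.exp_add]
    congr 2
    push_cast
    ring
  · intro i t
    show (Φ t *ᵥ v i) = Complex.exp (σ i * ↑t) • Complex.exp (-(σ i * ↑t)) • (Φ t *ᵥ v i)
    rw [smul_smul, ← Complex.exp_add, add_neg_cancel, Complex.exp_zero, one_smul]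
end

section
/- Boundedness in the stable region: Let A : ℝ → M₂(ℝ) be continuous and T-periodic (T > 0), let Φ : ℝ → M₂(ℝ) be the differentiable matrix solution of Φ'(t) = A(t)Φ(t) with Φ(0) = I, and assume det Φ(T) = 1 and |tr Φ(T)| < 2. Then every solution x of x' = A(t)x is bounded on ℝ, i.e. there exists K such that ‖x(t)‖ ≤ K for all t ∈ ℝ. -/
open Matrix Set

private lemma mulVec_norm_le' (B : Matrix (Fin 2) (Fin 2) ℝ) (v : Fin 2 → ℝ) :
    ‖B.mulVec v‖ ≤ (∑ i, ∑ j, |B i j|) * ‖v‖ := by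
  have hnn : 0 ≤ (∑ i, ∑ j, |B i j|) * ‖v‖ :=
    mul_nonneg (Finset.sum_nonneg fun i _ => Finset.sum_nonneg fun j _ => abs_nonneg _)
      (norm_nonneg _)
  rw [pi_norm_le_iff_of_nonneg hnn]
  intro i
  calc ‖B.mulVec v i‖ = |∑ j, B i j * v j| := by
        simp [Matrix.mulVec, dotProduct, Real.norm_eq_abs]
    _ ≤ ∑ j, |B i j * v j| := Finset.abs_sum_le_sum_abs _ _
    _ ≤ ∑ j, |B i j| * ‖v‖ := by
        refine Finset.sum_le_sum fun j _ => ?_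
        rw [abs_mul]
        exact mul_le_mul_of_nonneg_left
          ((Real.norm_eq_abs (v j)) ▸ norm_le_pi_norm v j) (abs_nonneg _)
    _ = (∑ j, |B i j|) * ‖v‖ := (Finset.sum_mul _ _ _).symm
    _ ≤ (∑ i, ∑ j, |B i j|) * ‖v‖ := by
        refine mul_le_mul_of_nonneg_right ?_ (norm_nonneg _)
        exact Finset.single_le_sum
          (f := fun i => ∑ j, |B i j|)
          (fun i _ => Finset.sum_nonneg fun j _ => abs_nonneg _) (Finset.mem_univ i)

private lemma linear_ODE_unique' (A : ℝ → Matrix (Fin 2) (Fin 2) ℝ)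
    (hA_cont : ∀ i j, Continuous fun t => A t i j)
    (f g : ℝ → Fin 2 → ℝ)
    (hf : ∀ t, HasDerivAt f ((A t).mulVec (f t)) t)
    (hg : ∀ t, HasDerivAt g ((A t).mulVec (g t)) t)
    (t₀ : ℝ) (h0 : f t₀ = g t₀) : ∀ t, f t = g t := by
  intro t₁
  set a := min t₀ t₁ - 1 with ha
  set b := max t₀ t₁ + 1 with hb
  have hab : a < b := by
    have h1 : min t₀ t₁ ≤ max t₀ t₁ := le_trans (min_le_left _ _) (le_max_left _ _)
    linarith
  have ht₀ : t₀ ∈ Ioo a b := by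
    constructor
    · have := min_le_left t₀ t₁; linarith
    · have := le_max_left t₀ t₁; linarith
  have ht₁ : t₁ ∈ Icc a b := by
    constructor
    · have := min_le_right t₀ t₁; linarith
    · have := le_max_right t₀ t₁; linarith
  set Nf : ℝ → ℝ := fun t => ∑ i, ∑ j, |A t i j| with hNfdef
  have hNf : Continuous Nf := by
    apply continuous_finset_sum
    intro i _
    exact continuous_finset_sum _ fun j _ => (hA_cont i j).abs
  obtain ⟨tm, htm, hmax⟩ := isCompact_Icc.exists_isMaxOn (nonempty_Icc.mpr hab.le)
    hNf.continuousOn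
  set K : NNReal := ⟨max (Nf tm) 0, le_max_right _ _⟩ with hK
  set cl : ℝ → ℝ := fun t => min b (max a t) with hcl
  have hcmem : ∀ t, cl t ∈ Icc a b := fun t =>
    ⟨le_min hab.le (le_max_left _ _), min_le_left _ _⟩
  have hcid : ∀ t ∈ Icc a b, cl t = t := by
    intro t ht
    simp only [hcl]
    rw [max_eq_right ht.1, min_eq_right ht.2]
  set v : ℝ → (Fin 2 → ℝ) → (Fin 2 → ℝ) := fun t x => (A (cl t)).mulVec x with hv
  have hvlip : ∀ t, LipschitzOnWith K (v t) univ := by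
    intro t
    apply LipschitzWith.lipschitzOnWith
    apply LipschitzWith.of_dist_le_mul
    intro x y
    rw [dist_eq_norm, dist_eq_norm]
    simp only [hv]
    rw [← Matrix.mulVec_sub]
    calc ‖(A (cl t)).mulVec (x - y)‖ ≤ Nf (cl t) * ‖x - y‖ := mulVec_norm_le' _ _
      _ ≤ K * ‖x - y‖ := by
          refine mul_le_mul_of_nonneg_right ?_ (norm_nonneg _)
          exact le_trans (hmax (hcmem t)) (le_max_left _ _)
  have hfd : ∀ t ∈ Ioo a b, HasDerivAt f (v t (f t)) t := by
    intro t ht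
    have : v t (f t) = (A t).mulVec (f t) := by
      simp only [hv, hcid t (Ioo_subset_Icc_self ht)]
    rw [this]; exact hf t
  have hgd : ∀ t ∈ Ioo a b, HasDerivAt g (v t (g t)) t := by
    intro t ht
    have : v t (g t) = (A t).mulVec (g t) := by
      simp only [hv, hcid t (Ioo_subset_Icc_self ht)]
    rw [this]; exact hg t
  have hfc : ContinuousOn f (Icc a b) :=
    (continuous_iff_continuousAt.mpr fun t => (hf t).continuousAt).continuousOn
  have hgc : ContinuousOn g (Icc a b) :=
    (continuous_iff_continuousAt.mpr fun t => (hg t).continuousAt).continuousOn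
  exact ODE_solution_unique_of_mem_Icc (fun t _ => hvlip t) ht₀ hfc hfd (fun _ _ => mem_univ _)
    hgc hgd (fun _ _ => mem_univ _) h0 ht₁

/-- **Boundedness in the stable region.** Let `A : ℝ → M₂(ℝ)` be continuous and `T`-periodic
(`T > 0`), let `Φ` be the differentiable matrix solution of `Φ'(t) = A(t) Φ(t)` with
`Φ 0 = 1`, and assume `det (Φ T) = 1` and `|tr (Φ T)| < 2`. Then every solution `x` of
`x' = A(t) x` is bounded on `ℝ`. -/
theorem bounded_solutions_in_stable_region (T : ℝ) (hT : 0 < T)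
    (A : ℝ → Matrix (Fin 2) (Fin 2) ℝ)
    (hA_cont : ∀ i j, Continuous fun t => A t i j)
    (hA_per : ∀ t, A (t + T) = A t)
    (Φ : ℝ → Matrix (Fin 2) (Fin 2) ℝ)
    (hΦ : ∀ t i j, HasDerivAt (fun s => Φ s i j) ((A t * Φ t) i j) t)
    (hΦ0 : Φ 0 = 1)
    (hdet : (Φ T).det = 1) (htr : |(Φ T).trace| < 2) :
    ∀ x : ℝ → (Fin 2 → ℝ),
      (∀ t, HasDerivAt x ((A t).mulVec (x t)) t) →
      ∃ K : ℝ, ∀ t, ‖x t‖ ≤ K := by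
  -- solutions generated by Φ
  have key : ∀ (v : Fin 2 → ℝ) (t : ℝ),
      HasDerivAt (fun s => (Φ s).mulVec v) ((A t).mulVec ((Φ t).mulVec v)) t := by
    intro v t
    rw [Matrix.mulVec_mulVec, hasDerivAt_pi]
    intro i
    simp only [Matrix.mulVec, dotProduct]
    exact HasDerivAt.fun_sum fun j _ => (hΦ t i j).mul_const (v j)
  have keyshift : ∀ (v : Fin 2 → ℝ) (t : ℝ),
      HasDerivAt (fun s => (Φ (s + T)).mulVec v) ((A t).mulVec ((Φ (t + T)).mulVec v)) t := by
    intro v t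
    have h2 : HasDerivAt (fun s : ℝ => s + T) 1 t := (hasDerivAt_id t).add_const T
    have h3 := (key v (t + T)).scomp t h2
    simpa [hA_per t, Function.comp_def] using h3
  have sol_eq : ∀ (x : ℝ → Fin 2 → ℝ),
      (∀ t, HasDerivAt x ((A t).mulVec (x t)) t) → ∀ t, x t = (Φ t).mulVec (x 0) := by
    intro x hx
    refine linear_ODE_unique' A hA_cont x (fun t => (Φ t).mulVec (x 0)) hx
      (fun t => key (x 0) t) 0 ?_
    simp [hΦ0, Matrix.one_mulVec]
  set M := Φ T with hM
  have shiftF : ∀ (v : Fin 2 → ℝ) (t : ℝ),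
      (Φ (t + T)).mulVec v = (Φ t).mulVec (M.mulVec v) := by
    intro v t
    refine linear_ODE_unique' A hA_cont (fun s => (Φ (s + T)).mulVec v)
      (fun s => (Φ s).mulVec (M.mulVec v)) (fun t => keyshift v t)
      (fun t => key (M.mulVec v) t) 0 ?_ t
    simp [hΦ0, Matrix.one_mulVec, hM]
  -- Cayley–Hamilton
  set c : ℝ := M.trace / 2 with hc
  have hc1 : c ^ 2 < 1 := by
    rw [abs_lt] at htr
    simp only [hc]
    nlinarith [htr.1, htr.2]
  have hCH : M * M = (2 * c) • M - 1 := by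
    have hd := hdet
    rw [Matrix.det_fin_two] at hd
    ext i j
    fin_cases i <;> fin_cases j <;>
      simp [Matrix.mul_apply, Fin.sum_univ_two, hc, Matrix.trace_fin_two,
        Matrix.smul_apply, Matrix.one_apply, Matrix.sub_apply, smul_eq_mul] <;>
      first
        | linear_combination -hd
        | ring
  set s : ℝ := Real.sqrt (1 - c ^ 2) with hsdef
  have hs : 0 < s := Real.sqrt_pos.mpr (by nlinarith)
  have hs2 : s ^ 2 = 1 - c ^ 2 := Real.sq_sqrt (by nlinarith)
  set S : Matrix (Fin 2) (Fin 2) ℝ := s⁻¹ • (M - c • 1) with hSdef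
  have hMS : M = c • 1 + s • S := by
    simp only [hSdef, smul_smul, mul_inv_cancel₀ hs.ne', one_smul]
    abel
  have hSS : S * S = -1 := by
    have h1 : (M - c • 1) * (M - c • 1) = (c ^ 2 - 1) • (1 : Matrix (Fin 2) (Fin 2) ℝ) := by
      simp only [sub_mul, mul_sub, smul_mul_assoc, mul_smul_comm, one_mul, mul_one, smul_smul]
      rw [hCH]
      module
    simp only [hSdef, smul_mul_assoc, mul_smul_comm, smul_smul, h1]
    have h3 : s⁻¹ * (s⁻¹ * (c ^ 2 - 1)) = -1 := by
      field_simp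
      nlinarith [hs2]
    rw [h3]
    simp
  set N : Matrix (Fin 2) (Fin 2) ℝ := (2 * c) • 1 - M with hNdef
  have hMN : M * N = 1 := by
    simp only [hNdef]
    simp only [mul_sub, mul_smul_comm, mul_one]
    rw [hCH]
    module
  have hNS : N = c • 1 + (-s) • S := by
    simp only [hNdef]
    rw [hMS]
    module
  have hprod : ∀ p q p' q' : ℝ,
      (p • (1 : Matrix (Fin 2) (Fin 2) ℝ) + q • S) * (p' • 1 + q' • S)
        = (p * p' - q * q') • 1 + (p * q' + q * p') • S := by
    intro p q p' q'
    simp only [add_mul, mul_add, smul_mul_assoc, mul_smul_comm, one_mul, mul_one,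
      smul_smul, hSS]
    module
  have shiftB : ∀ (w : Fin 2 → ℝ) (t : ℝ),
      (Φ (t - T)).mulVec w = (Φ t).mulVec (N.mulVec w) := by
    intro w t
    have h1 := shiftF (N.mulVec w) (t - T)
    have h2 : M.mulVec (N.mulVec w) = w := by
      rw [Matrix.mulVec_mulVec, hMN, Matrix.one_mulVec]
    rw [sub_add_cancel, h2] at h1
    exact h1.symm
  have claim : ∀ n : ℤ, ∃ p q : ℝ, p ^ 2 + q ^ 2 = 1 ∧
      ∀ (t : ℝ) (w : Fin 2 → ℝ),
        (Φ (t + n * T)).mulVec w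
          = (Φ t).mulVec ((p • (1 : Matrix (Fin 2) (Fin 2) ℝ) + q • S).mulVec w) := by
    intro n
    induction n using Int.induction_on with
    | zero =>
      refine ⟨1, 0, by norm_num, fun t w => ?_⟩
      simp [Matrix.one_mulVec]
    | succ k ih =>
      obtain ⟨p, q, hpq, hQ⟩ := ih
      refine ⟨p * c - q * s, p * s + q * c, by nlinarith [hs2], fun t w => ?_⟩
      rw [show t + ((((k : ℤ) + 1) : ℤ) : ℝ) * T = (t + (((k : ℤ) : ℤ) : ℝ) * T) + T by
        push_cast; ring]
      have hmat : (p • (1 : Matrix (Fin 2) (Fin 2) ℝ) + q • S) * M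
          = (p * c - q * s) • 1 + (p * s + q * c) • S := by
        rw [hMS, hprod]
      rw [shiftF w, hQ t (M.mulVec w)]
      rw [show (p • (1 : Matrix (Fin 2) (Fin 2) ℝ) + q • S).mulVec (M.mulVec w)
          = ((p * c - q * s) • (1 : Matrix (Fin 2) (Fin 2) ℝ)
              + (p * s + q * c) • S).mulVec w from by
        rw [Matrix.mulVec_mulVec, hmat]]
    | pred k ih =>
      obtain ⟨p, q, hpq, hQ⟩ := ih
      refine ⟨p * c + q * s, q * c - p * s, by nlinarith [hs2], fun t w => ?_⟩
      rw [show t + (((-(k : ℤ) - 1) : ℤ) : ℝ) * T = (t - T) + (((-(k : ℤ)) : ℤ) : ℝ) * T by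
        push_cast; ring]
      have hmat : N * (p • (1 : Matrix (Fin 2) (Fin 2) ℝ) + q • S)
          = (p * c + q * s) • 1 + (q * c - p * s) • S := by
        rw [hNS, hprod]
        module
      rw [hQ (t - T) w, shiftB _ t]
      rw [show N.mulVec ((p • (1 : Matrix (Fin 2) (Fin 2) ℝ) + q • S).mulVec w)
          = ((p * c + q * s) • (1 : Matrix (Fin 2) (Fin 2) ℝ)
              + (q * c - p * s) • S).mulVec w from by
        rw [Matrix.mulVec_mulVec, hmat]]
  -- boundedness of Φ on [0, T]
  have hΦc : ∀ i j, Continuous fun t => Φ t i j := fun i j =>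
    continuous_iff_continuousAt.mpr fun t => (hΦ t i j).continuousAt
  set g : ℝ → ℝ := fun t => ∑ i, ∑ j, |Φ t i j| with hgdef
  have hgc : Continuous g :=
    continuous_finset_sum _ fun i _ => continuous_finset_sum _ fun j _ => (hΦc i j).abs
  obtain ⟨tm, _, hmax⟩ := isCompact_Icc.exists_isMaxOn (nonempty_Icc.mpr hT.le)
    hgc.continuousOn
  set CS : ℝ := ∑ i, ∑ j, |S i j| with hCSdef
  have hCS0 : 0 ≤ CS :=
    Finset.sum_nonneg fun i _ => Finset.sum_nonneg fun j _ => abs_nonneg _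
  -- final bound
  intro x hx
  refine ⟨g tm * ((1 + CS) * ‖x 0‖), fun t => ?_⟩
  set n : ℤ := ⌊t / T⌋ with hn
  set σ : ℝ := t - n * T with hσ
  have hσ0 : 0 ≤ σ := Int.sub_floor_div_mul_nonneg t hT
  have hσT : σ < T := Int.sub_floor_div_mul_lt t hT
  obtain ⟨p, q, hpq, hQ⟩ := claim n
  have hxt : x t = (Φ σ).mulVec ((p • (1 : Matrix (Fin 2) (Fin 2) ℝ) + q • S).mulVec (x 0)) := by
    rw [sol_eq x hx t, show t = σ + n * T by simp [hσ]]
    exact hQ σ (x 0)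
  have hp1 : |p| ≤ 1 := abs_le.mpr ⟨by nlinarith, by nlinarith⟩
  have hq1 : |q| ≤ 1 := abs_le.mpr ⟨by nlinarith, by nlinarith⟩
  have hw : ‖(p • (1 : Matrix (Fin 2) (Fin 2) ℝ) + q • S).mulVec (x 0)‖
      ≤ (1 + CS) * ‖x 0‖ := by
    rw [Matrix.add_mulVec, Matrix.smul_mulVec, Matrix.smul_mulVec,
      Matrix.one_mulVec]
    calc ‖p • x 0 + q • S.mulVec (x 0)‖ ≤ ‖p • x 0‖ + ‖q • S.mulVec (x 0)‖ := norm_add_le _ _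
      _ = |p| * ‖x 0‖ + |q| * ‖S.mulVec (x 0)‖ := by
          rw [norm_smul, norm_smul, Real.norm_eq_abs, Real.norm_eq_abs]
      _ ≤ 1 * ‖x 0‖ + 1 * (CS * ‖x 0‖) := by
          gcongr
          · exact mulVec_norm_le' S (x 0)
      _ = (1 + CS) * ‖x 0‖ := by ring
  rw [hxt]
  calc ‖(Φ σ).mulVec ((p • (1 : Matrix (Fin 2) (Fin 2) ℝ) + q • S).mulVec (x 0))‖
      ≤ g σ * ‖(p • (1 : Matrix (Fin 2) (Fin 2) ℝ) + q • S).mulVec (x 0)‖ :=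
        mulVec_norm_le' _ _
    _ ≤ g tm * ((1 + CS) * ‖x 0‖) := by
        apply mul_le_mul (hmax ⟨hσ0, hσT.le⟩) hw (norm_nonneg _)
        exact le_trans (Finset.sum_nonneg fun i _ => Finset.sum_nonneg fun j _ => abs_nonneg _)
          (hmax ⟨hσ0, hσT.le⟩)
end
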